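/- arXiv:1211.4664 — 2 statements merged into one kernel-verified Lean document; each statement's English description precedes it below -/
import Mathlib

section
/- (Theorem 1, KKT form) Fix μ > 0 and (ς̄,σ̄) ∈ S_μ⁺, and set x̄ = G_μ(ς̄,σ̄)⁻¹(c − σ̄b). If ς̄ = ½|Bx̄|² − λ, h(x̄) ≥ 1/μ, and σ̄·(h(x̄) − 1/μ) = 0, then x̄ ∈ X_μ, P_μ(x̄) = P^d_μ(ς̄,σ̄), and x̄ is a global minimizer of P_μ over X_μ, i.e., P_μ(x̄) ≤ P_μ(x) for all x with h(x) ≥ 1/μ. -/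
/-!
Weak duality through the total complementary function `Ξ_μ`. Since `σ̄ ≥ 0` and
`μς t − (μ/2)ς² ≤ (μ/2)t²`, we have `Ξ_μ(x, ς̄, σ̄) ≤ P_μ(x)` on `X_μ`, with equality at `x̄` by
the KKT conditions. As a function of `x`, `Ξ_μ(·, ς̄, σ̄)` is the quadratic `½xᵀGx − (c − σ̄b)ᵀx`
plus a constant, with `G = G_μ(ς̄, σ̄)` positive definite, so it is minimised at its critical point
`x̄`, where it takes the value `P^d_μ(ς̄, σ̄)`.
-/

open Matrix Set Filter

noncomputable section

/-- `q(x) = ½ xᵀQx − cᵀx`. -/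
def qfun {n : ℕ} (Q : Matrix (Fin n) (Fin n) ℝ) (c : Fin n → ℝ) (x : Fin n → ℝ) : ℝ :=
  (1/2) * (x ⬝ᵥ (Q *ᵥ x)) - c ⬝ᵥ x

/-- `g(x) = ½ (½|Bx|² − λ)²`. -/
def gfun {n m : ℕ} (B : Matrix (Fin m) (Fin n) ℝ) (lam : ℝ) (x : Fin n → ℝ) : ℝ :=
  (1/2) * ((1/2) * ((B *ᵥ x) ⬝ᵥ (B *ᵥ x)) - lam)^2

/-- `h(x) = ½ xᵀHx − bᵀx`. -/
def hfun {n : ℕ} (H : Matrix (Fin n) (Fin n) ℝ) (b : Fin n → ℝ) (x : Fin n → ℝ) : ℝ :=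
  (1/2) * (x ⬝ᵥ (H *ᵥ x)) - b ⬝ᵥ x

/-- `G_μ(ς,σ) = Q + μς BᵀB − σH`. -/
def Gmu {n m : ℕ} (Q : Matrix (Fin n) (Fin n) ℝ) (B : Matrix (Fin m) (Fin n) ℝ)
    (H : Matrix (Fin n) (Fin n) ℝ) (μ ς σ : ℝ) : Matrix (Fin n) (Fin n) ℝ :=
  Q + (μ * ς) • (Bᵀ * B) - σ • H

/-- The dual feasible set `S_μ⁺`. -/
def Smu {n m : ℕ} (Q : Matrix (Fin n) (Fin n) ℝ) (B : Matrix (Fin m) (Fin n) ℝ)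
    (H : Matrix (Fin n) (Fin n) ℝ) (lam μ : ℝ) : Set (ℝ × ℝ) :=
  {p : ℝ × ℝ | -lam ≤ p.1 ∧ 0 ≤ p.2 ∧ (Gmu Q B H μ p.1 p.2).PosDef}

/-- The canonical dual function `P^d_μ(ς,σ)`. -/
def Pd {n m : ℕ} (Q : Matrix (Fin n) (Fin n) ℝ) (B : Matrix (Fin m) (Fin n) ℝ)
    (H : Matrix (Fin n) (Fin n) ℝ) (lam : ℝ) (c b : Fin n → ℝ) (μ ς σ : ℝ) : ℝ :=
  -(1/2) * ((c - σ • b) ⬝ᵥ ((Gmu Q B H μ ς σ)⁻¹ *ᵥ (c - σ • b)))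
    - μ * lam * ς - (μ/2) * ς^2 + σ/μ

/-- The total complementary function `Ξ_μ(x,ς,σ)`. -/
def Xi {n m : ℕ} (Q : Matrix (Fin n) (Fin n) ℝ) (B : Matrix (Fin m) (Fin n) ℝ)
    (H : Matrix (Fin n) (Fin n) ℝ) (lam : ℝ) (c b : Fin n → ℝ)
    (μ : ℝ) (x : Fin n → ℝ) (ς σ : ℝ) : ℝ :=
  (1/2) * (x ⬝ᵥ (Gmu Q B H μ ς σ *ᵥ x)) - (c - σ • b) ⬝ᵥ x
    - μ * lam * ς - (μ/2) * ς^2 + σ/μ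

theorem Matrix.PosSemidef.quadratic_le_of_mulVec_eq {ι : Type*} [Fintype ι]
    {G : Matrix ι ι ℝ} (hG : G.PosSemidef) {w x₀ : ι → ℝ} (hx₀ : G *ᵥ x₀ = w) (x : ι → ℝ) :
    (1/2) * (x₀ ⬝ᵥ (G *ᵥ x₀)) - w ⬝ᵥ x₀ ≤ (1/2) * (x ⬝ᵥ (G *ᵥ x)) - w ⬝ᵥ x := by
  have hsymm : Gᵀ = G := isHermitian_iff_isSymm.mp hG.isHermitian
  have hwx : w ⬝ᵥ x = x₀ ⬝ᵥ (G *ᵥ x) := by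
    rw [← hx₀, dotProduct_mulVec, ← mulVec_transpose, hsymm, dotProduct_comm]
  have hwx₀ : w ⬝ᵥ x₀ = x₀ ⬝ᵥ (G *ᵥ x₀) := by rw [← hx₀, dotProduct_comm]
  have hsq : 0 ≤ (x - x₀) ⬝ᵥ (G *ᵥ (x - x₀)) := by
    simpa using hG.dotProduct_mulVec_nonneg (x - x₀)
  have hcross : x ⬝ᵥ (G *ᵥ x₀) = x₀ ⬝ᵥ (G *ᵥ x) := by
    rw [dotProduct_mulVec, ← mulVec_transpose, hsymm, dotProduct_comm]
  simp only [mulVec_sub, dotProduct_sub, sub_dotProduct] at hsq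
  nlinarith

section Duality

variable {n m : ℕ} (Q : Matrix (Fin n) (Fin n) ℝ) (B : Matrix (Fin m) (Fin n) ℝ)
  (H : Matrix (Fin n) (Fin n) ℝ) (lam : ℝ) (c b : Fin n → ℝ) (μ : ℝ)

theorem Xi_eq_qfun_add (x : Fin n → ℝ) (ς σ : ℝ) :
    Xi Q B H lam c b μ x ς σ =
      qfun Q c x + μ * ς * ((1/2) * ((B *ᵥ x) ⬝ᵥ (B *ᵥ x)) - lam)
        - (μ/2) * ς^2 - σ * (hfun H b x - 1/μ) := by
  have hBB : x ⬝ᵥ ((Bᵀ * B) *ᵥ x) = (B *ᵥ x) ⬝ᵥ (B *ᵥ x) := by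
    rw [← mulVec_mulVec, dotProduct_mulVec, vecMul_transpose]
  simp only [Xi, Gmu, sub_mulVec, add_mulVec, smul_mulVec, dotProduct_sub, dotProduct_add,
    dotProduct_smul, sub_dotProduct, smul_dotProduct, smul_eq_mul, hBB, qfun, hfun]
  ring

variable {Q B H lam c b μ}

theorem Xi_le_of_le_hfun (hμ : 0 ≤ μ) {ς σ : ℝ} (hσ : 0 ≤ σ) {x : Fin n → ℝ}
    (hx : 1/μ ≤ hfun H b x) :
    Xi Q B H lam c b μ x ς σ ≤ qfun Q c x + μ * gfun B lam x := by
  rw [Xi_eq_qfun_add, gfun]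
  have hslack : 0 ≤ σ * (hfun H b x - 1/μ) := mul_nonneg hσ (by linarith)
  -- `μςt − (μ/2)ς² = (μ/2)t² − (μ/2)(t − ς)²` with `t = ½|Bx|² − λ`
  have hconj : 0 ≤ (μ/2) * ((1/2) * ((B *ᵥ x) ⬝ᵥ (B *ᵥ x)) - lam - ς)^2 := by positivity
  nlinarith

theorem Xi_eq_of_kkt {ς σ : ℝ} {x : Fin n → ℝ}
    (hς : ς = (1/2) * ((B *ᵥ x) ⬝ᵥ (B *ᵥ x)) - lam) (hσ : σ * (hfun H b x - 1/μ) = 0) :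
    Xi Q B H lam c b μ x ς σ = qfun Q c x + μ * gfun B lam x := by
  rw [Xi_eq_qfun_add, hσ, gfun, ← hς]
  ring

theorem Xi_le_Xi_of_mulVec_eq {ς σ : ℝ} (hG : (Gmu Q B H μ ς σ).PosSemidef)
    {x₀ : Fin n → ℝ} (hx₀ : Gmu Q B H μ ς σ *ᵥ x₀ = c - σ • b) (x : Fin n → ℝ) :
    Xi Q B H lam c b μ x₀ ς σ ≤ Xi Q B H lam c b μ x ς σ := by
  have := hG.quadratic_le_of_mulVec_eq hx₀ x
  simp only [Xi]
  linarith

theorem Xi_eq_Pd {ς σ : ℝ} (hG : IsUnit (Gmu Q B H μ ς σ).det) {x₀ : Fin n → ℝ}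
    (hx₀ : x₀ = (Gmu Q B H μ ς σ)⁻¹ *ᵥ (c - σ • b)) :
    Xi Q B H lam c b μ x₀ ς σ = Pd Q B H lam c b μ ς σ := by
  have hGx₀ : Gmu Q B H μ ς σ *ᵥ x₀ = c - σ • b := by
    rw [hx₀, mulVec_mulVec, mul_nonsing_inv _ hG, one_mulVec]
  rw [Xi, Pd, hGx₀, ← hx₀, dotProduct_comm x₀]
  ring

end Duality

theorem stmt_12_general {n m : ℕ}
    (Q : Matrix (Fin n) (Fin n) ℝ)
    (B : Matrix (Fin m) (Fin n) ℝ)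
    (H : Matrix (Fin n) (Fin n) ℝ)
    (lam : ℝ) (c b : Fin n → ℝ)
    (μ : ℝ) (hμ : 0 < μ)
    (ςb σb : ℝ) (hmem : (ςb, σb) ∈ Smu Q B H lam μ)
    (xbar : Fin n → ℝ) (hxbar : xbar = (Gmu Q B H μ ςb σb)⁻¹ *ᵥ (c - σb • b))
    (h1 : ςb = (1/2) * ((B *ᵥ xbar) ⬝ᵥ (B *ᵥ xbar)) - lam)
    (h2 : 1/μ ≤ hfun H b xbar)
    (h3 : σb * (hfun H b xbar - 1/μ) = 0) :
    xbar ∈ {x : Fin n → ℝ | 1/μ ≤ hfun H b x} ∧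
    qfun Q c xbar + μ * gfun B lam xbar = Pd Q B H lam c b μ ςb σb ∧
    (∀ x : Fin n → ℝ, 1/μ ≤ hfun H b x →
      qfun Q c xbar + μ * gfun B lam xbar ≤ qfun Q c x + μ * gfun B lam x) := by
  obtain ⟨-, hσ, hPD⟩ := hmem
  have hdet : IsUnit (Gmu Q B H μ ςb σb).det := hPD.det_pos.ne'.isUnit
  have hGx : Gmu Q B H μ ςb σb *ᵥ xbar = c - σb • b := by
    rw [hxbar, mulVec_mulVec, mul_nonsing_inv _ hdet, one_mulVec]
  refine ⟨h2, by rw [← Xi_eq_of_kkt h1 h3, Xi_eq_Pd hdet hxbar], fun x hx => ?_⟩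
  calc qfun Q c xbar + μ * gfun B lam xbar = Xi Q B H lam c b μ xbar ςb σb :=
        (Xi_eq_of_kkt h1 h3).symm
    _ ≤ Xi Q B H lam c b μ x ςb σb := Xi_le_Xi_of_mulVec_eq hPD.posSemidef hGx x
    _ ≤ qfun Q c x + μ * gfun B lam x := Xi_le_of_le_hfun hμ.le hσ hx

/-- Theorem 1, KKT form: if `(ς̄,σ̄) ∈ S_μ⁺` and
`x̄ = G_μ(ς̄,σ̄)⁻¹(c − σ̄b)` satisfies the KKT conditions, then `x̄ ∈ X_μ`,
`P_μ(x̄) = P^d_μ(ς̄,σ̄)`, and `x̄` globally minimizes `P_μ` over `X_μ`. -/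
theorem stmt_12 {n m : ℕ} (hn : 0 < n) (hm : 0 < m)
    (Q : Matrix (Fin n) (Fin n) ℝ) (hQsymm : Q.IsSymm)
    (B : Matrix (Fin m) (Fin n) ℝ)
    (H : Matrix (Fin n) (Fin n) ℝ) (hHsymm : H.IsSymm) (hHneg : (-H).PosDef)
    (lam : ℝ) (hlam : 0 ≤ lam) (c b : Fin n → ℝ)
    (μ : ℝ) (hμ : 0 < μ)
    (ςb σb : ℝ) (hmem : (ςb, σb) ∈ Smu Q B H lam μ)
    (xbar : Fin n → ℝ) (hxbar : xbar = (Gmu Q B H μ ςb σb)⁻¹ *ᵥ (c - σb • b))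
    (h1 : ςb = (1/2) * ((B *ᵥ xbar) ⬝ᵥ (B *ᵥ xbar)) - lam)
    (h2 : 1/μ ≤ hfun H b xbar)
    (h3 : σb * (hfun H b xbar - 1/μ) = 0) :
    xbar ∈ {x : Fin n → ℝ | 1/μ ≤ hfun H b x} ∧
    qfun Q c xbar + μ * gfun B lam xbar = Pd Q B H lam c b μ ςb σb ∧
    (∀ x : Fin n → ℝ, 1/μ ≤ hfun H b x →
      qfun Q c xbar + μ * gfun B lam xbar ≤ qfun Q c x + μ * gfun B lam x) :=
  stmt_12_general Q B H lam c b μ hμ ςb σb hmem xbar hxbar h1 h2 h3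
end
end

section
/- (Criticality implies the canonical dual equations) Fix μ > 0 and (ς̄,σ̄) with ς̄ > −λ, σ̄ > 0 and G_μ(ς̄,σ̄) positive definite, and set x̄ = G_μ(ς̄,σ̄)⁻¹(c − σ̄b). If the Fréchet derivative of P^d_μ vanishes at (ς̄,σ̄), then ς̄ = ½|Bx̄|² − λ and h(x̄) = 1/μ, and consequently P^d_μ(ς̄,σ̄) = P_μ(x̄). -/
/-! Where `G_μ` is positive definite, `P^d_μ(ς,σ) = min_x Ξ_μ(x,ς,σ)`, attained at
`x = G_μ⁻¹(c − σb)`, and positive definiteness is an open condition. So `P^d_μ ≤ Ξ_μ(x̄,·,·)`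
near `(ς̄,σ̄)` with equality at `(ς̄,σ̄)`, and the two functions have the same derivative there.
As `Ξ_μ(x̄,ς,σ) = q(x̄) + μς(½|Bx̄|² − λ) − σ(h(x̄) − 1/μ) − μς²/2`, the vanishing of its two
partial derivatives is exactly the pair of canonical equations, and substituting them into
`Ξ_μ(x̄,ς̄,σ̄)` gives `P_μ(x̄)`. -/

open Matrix Set Filter

noncomputable section

open scoped Topology

theorem Matrix.PosDef.eventually_nhds {ι X : Type*} [Fintype ι] [TopologicalSpace X]
    {M : X → Matrix ι ι ℝ} {p₀ : X} (hM : ContinuousAt M p₀)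
    (hherm : ∀ᶠ p in 𝓝 p₀, (M p).IsHermitian) (hpos : (M p₀).PosDef) :
    ∀ᶠ p in 𝓝 p₀, (M p).PosDef := by
  -- positivity on the compact unit sphere persists nearby (tube lemma); homogeneity does the rest
  have hsphere : ∀ᶠ p in 𝓝 p₀, ∀ x ∈ Metric.sphere (0 : ι → ℝ) 1, 0 < x ⬝ᵥ (M p *ᵥ x) := by
    refine (isCompact_sphere 0 1).eventually_forall_of_forall_eventually fun x hx => ?_
    have hcont : ContinuousAt (fun z : X × (ι → ℝ) => z.2 ⬝ᵥ (M z.1 *ᵥ z.2)) (p₀, x) :=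
      (continuous_snd.dotProduct (continuous_fst.matrix_mulVec continuous_snd)).continuousAt.comp
        (f := fun z : X × (ι → ℝ) => (M z.1, z.2))
        ((hM.comp continuousAt_fst).prodMk continuousAt_snd)
    have hx0 : x ≠ 0 := ne_zero_of_mem_unit_sphere ⟨x, hx⟩
    exact hcont.eventually (lt_mem_nhds (by simpa using hpos.dotProduct_mulVec_pos hx0))
  filter_upwards [hherm, hsphere] with p hp hsp
  refine .of_dotProduct_mulVec_pos hp fun x hx => ?_
  have hunit := hsp (‖x‖⁻¹ • x) (by simp [norm_smul, hx])
  rw [mulVec_smul, dotProduct_smul, smul_dotProduct, smul_eq_mul, smul_eq_mul] at hunit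
  simpa using pos_of_mul_pos_right (pos_of_mul_pos_right hunit (by positivity)) (by positivity)

theorem HasFDerivAt.eq_of_eventuallyLE_of_eq {E : Type*} [NormedAddCommGroup E] [NormedSpace ℝ E]
    {f g : E → ℝ} {f' g' : E →L[ℝ] ℝ} {x : E} (hf : HasFDerivAt f f' x) (hg : HasFDerivAt g g' x)
    (hle : f ≤ᶠ[𝓝 x] g) (heq : f x = g x) : f' = g' := by
  have hmin : IsLocalMin (fun y => g y - f y) x :=
    hle.mono fun y hy => by simpa [heq] using hy
  exact (sub_eq_zero.mp (hmin.hasFDerivAt_eq_zero (hg.sub hf))).symm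

theorem Matrix.PosDef.dotProduct_inv_mulVec_le {ι : Type*} [Fintype ι] [DecidableEq ι]
    {G : Matrix ι ι ℝ} (hG : G.PosDef) (y x : ι → ℝ) :
    -(1/2) * (y ⬝ᵥ (G⁻¹ *ᵥ y)) ≤ (1/2) * (x ⬝ᵥ (G *ᵥ x)) - y ⬝ᵥ x := by
  set z := G⁻¹ *ᵥ y
  have hGz : G *ᵥ z = y := by
    rw [mulVec_mulVec, mul_nonsing_inv _ hG.det_pos.ne'.isUnit, one_mulVec]
  have hzG : z ᵥ* G = y := by
    rw [← mulVec_transpose, (isHermitian_iff_isSymm.mp hG.isHermitian).eq, hGz]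
  have hsq : 0 ≤ (x - z) ⬝ᵥ (G *ᵥ (x - z)) := by
    simpa using hG.posSemidef.dotProduct_mulVec_nonneg (x - z)
  have hcross : z ⬝ᵥ (G *ᵥ x) = y ⬝ᵥ x := by rw [dotProduct_mulVec, hzG]
  rw [mulVec_sub, dotProduct_sub, sub_dotProduct, sub_dotProduct, hGz, hcross,
    dotProduct_comm x y] at hsq
  linarith [dotProduct_comm z y]

theorem Matrix.PosDef.dotProduct_inv_mulVec_eq {ι : Type*} [Fintype ι] [DecidableEq ι]
    {G : Matrix ι ι ℝ} (hG : G.PosDef) (y : ι → ℝ) :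
    -(1/2) * (y ⬝ᵥ (G⁻¹ *ᵥ y)) = (1/2) * ((G⁻¹ *ᵥ y) ⬝ᵥ (G *ᵥ (G⁻¹ *ᵥ y))) - y ⬝ᵥ (G⁻¹ *ᵥ y) := by
  rw [mulVec_mulVec, mul_nonsing_inv _ hG.det_pos.ne'.isUnit, one_mulVec, dotProduct_comm]
  ring

section CanonicalDual

variable {n m : ℕ} {Q : Matrix (Fin n) (Fin n) ℝ} {B : Matrix (Fin m) (Fin n) ℝ}
  {H : Matrix (Fin n) (Fin n) ℝ} {lam μ : ℝ} {c b : Fin n → ℝ}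

theorem Gmu_eq_add (ς₀ σ₀ ς σ : ℝ) :
    Gmu Q B H μ ς σ = Gmu Q B H μ ς₀ σ₀ + (μ * (ς - ς₀)) • (Bᵀ * B) - (σ - σ₀) • H := by
  unfold Gmu
  module

theorem eventually_posDef_Gmu (hH : H.IsSymm) {ς₀ σ₀ : ℝ} (hpd : (Gmu Q B H μ ς₀ σ₀).PosDef) :
    ∀ᶠ p : ℝ × ℝ in 𝓝 (ς₀, σ₀), (Gmu Q B H μ p.1 p.2).PosDef := by
  have hBB : (Bᵀ * B).IsSymm := by rw [IsSymm, transpose_mul, transpose_transpose]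
  have hsymm (p : ℝ × ℝ) : (Gmu Q B H μ p.1 p.2).IsSymm := by
    rw [Gmu_eq_add ς₀ σ₀]
    exact ((isHermitian_iff_isSymm.mp hpd.isHermitian).add (hBB.smul _)).sub (hH.smul _)
  refine hpd.eventually_nhds ?_ (.of_forall fun p => isHermitian_iff_isSymm.mpr (hsymm p))
  unfold Gmu
  fun_prop

theorem Xi_eq (x : Fin n → ℝ) (ς σ : ℝ) :
    Xi Q B H lam c b μ x ς σ = qfun Q c x + μ * ς * ((1/2) * ((B *ᵥ x) ⬝ᵥ (B *ᵥ x)) - lam)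
      - σ * (hfun H b x - 1/μ) - (μ/2) * ς^2 := by
  have hBB : x ⬝ᵥ ((Bᵀ * B) *ᵥ x) = (B *ᵥ x) ⬝ᵥ (B *ᵥ x) := by
    rw [← mulVec_mulVec, dotProduct_mulVec, vecMul_transpose]
  unfold Xi Gmu qfun hfun
  simp only [sub_mulVec, add_mulVec, smul_mulVec, dotProduct_sub, dotProduct_add,
    dotProduct_smul, sub_dotProduct, smul_dotProduct, hBB, smul_eq_mul]
  ring

theorem Pd_eq_Xi {ς σ : ℝ} (hpd : (Gmu Q B H μ ς σ).PosDef) :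
    Pd Q B H lam c b μ ς σ = Xi Q B H lam c b μ ((Gmu Q B H μ ς σ)⁻¹ *ᵥ (c - σ • b)) ς σ := by
  unfold Pd Xi
  rw [hpd.dotProduct_inv_mulVec_eq]

theorem Pd_le_Xi {ς σ : ℝ} (hpd : (Gmu Q B H μ ς σ).PosDef) (x : Fin n → ℝ) :
    Pd Q B H lam c b μ ς σ ≤ Xi Q B H lam c b μ x ς σ := by
  unfold Pd Xi
  linarith [hpd.dotProduct_inv_mulVec_le (c - σ • b) x]

theorem hasFDerivAt_Xi (x : Fin n → ℝ) (p : ℝ × ℝ) :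
    HasFDerivAt (fun p : ℝ × ℝ => Xi Q B H lam c b μ x p.1 p.2)
      ((μ * ((1/2) * ((B *ᵥ x) ⬝ᵥ (B *ᵥ x)) - lam - p.1)) • ContinuousLinearMap.fst ℝ ℝ ℝ
        - (hfun H b x - 1/μ) • ContinuousLinearMap.snd ℝ ℝ ℝ) p := by
  simp_rw [Xi_eq]
  set E := (1/2) * ((B *ᵥ x) ⬝ᵥ (B *ᵥ x)) - lam
  have hfst : HasFDerivAt (fun p : ℝ × ℝ => p.1) (ContinuousLinearMap.fst ℝ ℝ ℝ) p :=
    hasFDerivAt_fst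
  have hsnd : HasFDerivAt (fun p : ℝ × ℝ => p.2) (ContinuousLinearMap.snd ℝ ℝ ℝ) p :=
    hasFDerivAt_snd
  refine ((((hasFDerivAt_const (qfun Q c x) p).add ((hfst.const_mul μ).mul_const E)).sub
    (hsnd.mul_const (hfun H b x - 1/μ))).sub ((hfst.pow 2).const_mul (μ/2))).congr_fderiv ?_
  ext <;> simp
  ring

end CanonicalDual

theorem stmt_14_general {n m : ℕ}
    (Q : Matrix (Fin n) (Fin n) ℝ)
    (B : Matrix (Fin m) (Fin n) ℝ)
    (H : Matrix (Fin n) (Fin n) ℝ) (hHsymm : H.IsSymm)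
    (lam : ℝ) (c b : Fin n → ℝ)
    (μ : ℝ) (hμ : 0 < μ)
    (ςb σb : ℝ)
    (hpd : (Gmu Q B H μ ςb σb).PosDef)
    (xbar : Fin n → ℝ) (hxbar : xbar = (Gmu Q B H μ ςb σb)⁻¹ *ᵥ (c - σb • b))
    (hcrit : HasFDerivAt (fun p : ℝ × ℝ => Pd Q B H lam c b μ p.1 p.2)
      (0 : ℝ × ℝ →L[ℝ] ℝ) (ςb, σb)) :
    ςb = (1/2) * ((B *ᵥ xbar) ⬝ᵥ (B *ᵥ xbar)) - lam ∧
    hfun H b xbar = 1/μ ∧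
    Pd Q B H lam c b μ ςb σb = qfun Q c xbar + μ * gfun B lam xbar := by
  have hle : (fun p : ℝ × ℝ => Pd Q B H lam c b μ p.1 p.2) ≤ᶠ[𝓝 (ςb, σb)]
      fun p => Xi Q B H lam c b μ xbar p.1 p.2 :=
    (eventually_posDef_Gmu hHsymm hpd).mono fun p hp => Pd_le_Xi hp xbar
  have hval : Pd Q B H lam c b μ ςb σb = Xi Q B H lam c b μ xbar ςb σb := hxbar ▸ Pd_eq_Xi hpd
  have hL := hcrit.eq_of_eventuallyLE_of_eq (hasFDerivAt_Xi xbar (ςb, σb)) hle hval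
  have hς : ςb = (1/2) * ((B *ᵥ xbar) ⬝ᵥ (B *ᵥ xbar)) - lam := by
    have h : μ * ((1/2) * ((B *ᵥ xbar) ⬝ᵥ (B *ᵥ xbar)) - lam - ςb) = 0 := by
      simpa using (DFunLike.congr_fun hL (1, 0)).symm
    linarith [(mul_eq_zero.mp h).resolve_left hμ.ne']
  have hh : hfun H b xbar = 1/μ := by
    simpa [sub_eq_zero, eq_comm] using DFunLike.congr_fun hL (0, 1)
  refine ⟨hς, hh, ?_⟩
  rw [hval, Xi_eq, hh, gfun, ← hς]
  ring

/-- criticality implies the canonical dual equations: if the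
Fréchet derivative of `P^d_μ` vanishes at an interior point `(ς̄,σ̄)` of `S_μ⁺`,
then `ς̄ = ½|Bx̄|² − λ`, `h(x̄) = 1/μ`, and `P^d_μ(ς̄,σ̄) = P_μ(x̄)`. -/
theorem stmt_14 {n m : ℕ} (hn : 0 < n) (hm : 0 < m)
    (Q : Matrix (Fin n) (Fin n) ℝ) (hQsymm : Q.IsSymm)
    (B : Matrix (Fin m) (Fin n) ℝ)
    (H : Matrix (Fin n) (Fin n) ℝ) (hHsymm : H.IsSymm) (hHneg : (-H).PosDef)
    (lam : ℝ) (hlam : 0 ≤ lam) (c b : Fin n → ℝ)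
    (μ : ℝ) (hμ : 0 < μ)
    (ςb σb : ℝ) (hςb : -lam < ςb) (hσb : 0 < σb)
    (hpd : (Gmu Q B H μ ςb σb).PosDef)
    (xbar : Fin n → ℝ) (hxbar : xbar = (Gmu Q B H μ ςb σb)⁻¹ *ᵥ (c - σb • b))
    (hcrit : HasFDerivAt (fun p : ℝ × ℝ => Pd Q B H lam c b μ p.1 p.2)
      (0 : ℝ × ℝ →L[ℝ] ℝ) (ςb, σb)) :
    ςb = (1/2) * ((B *ᵥ xbar) ⬝ᵥ (B *ᵥ xbar)) - lam ∧
    hfun H b xbar = 1/μ ∧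
    Pd Q B H lam c b μ ςb σb = qfun Q c xbar + μ * gfun B lam xbar :=
  stmt_14_general Q B H hHsymm lam c b μ hμ ςb σb hpd xbar hxbar hcrit
end
end
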